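/- arXiv:2206.14354 — 5 statements merged into one kernel-verified Lean document; each statement's English description precedes it below -/
import Mathlib

section
/- Suppose A ∈ ℝ^{n×d}, b ∈ ℝ^n, X ∈ ℝ^{m×n} with XA = 0 and ker(X) equal to the column space of A, and c = -Xb. If there exist a k-sparse vector w with Ax - b = w for some x (equivalently, a subset S of n-k rows on which Ax = b holds), then Xw = c; conversely, any k-sparse w' with Xw' = c yields x' and a subset S' of n-k rows with (A x' - b) restricted to S' equal to zero. Hence the robust regression problem (minimize ‖(Ax-b)_S‖ over |S^c| ≤ k) has optimal value 0 if and only if the sparse regression problem min{‖Xw - c‖ : ‖w‖₀ ≤ k} has optimal value 0. -/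
open Matrix Classical

noncomputable def sparsity {n : ℕ} (v : Fin n → ℝ) : ℕ :=
  (Finset.univ.filter fun i => v i ≠ 0).card

theorem robust_zero_iff_sparse_zero (n d m k : ℕ)
    (A : Matrix (Fin n) (Fin d) ℝ) (b : Fin n → ℝ)
    (X : Matrix (Fin m) (Fin n) ℝ)
    (hXA : X * A = 0)
    (hker : ∀ v : Fin n → ℝ, X.mulVec v = 0 ↔ ∃ x : Fin d → ℝ, A.mulVec x = v)
    (c : Fin m → ℝ) (hc : c = -(X.mulVec b)) :
    -- forward direction: a k-sparse residual w = Ax - b satisfies Xw = c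
    (∀ (x : Fin d → ℝ) (w : Fin n → ℝ), sparsity w ≤ k → A.mulVec x - b = w →
      X.mulVec w = c) ∧
    -- converse: a k-sparse solution w' of Xw' = c yields x' and a row set S' of
    -- size n - k with (A x' - b) vanishing on S'
    (∀ w' : Fin n → ℝ, sparsity w' ≤ k → X.mulVec w' = c →
      ∃ (x' : Fin d → ℝ) (S' : Finset (Fin n)), n - k ≤ S'.card ∧
        ∀ i ∈ S', (A.mulVec x' - b) i = 0) ∧
    -- hence: robust regression has value 0 iff sparse regression has value 0
    ((∃ (x : Fin d → ℝ) (S : Finset (Fin n)), n - k ≤ S.card ∧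
        ∀ i ∈ S, (A.mulVec x - b) i = 0) ↔
      (∃ w : Fin n → ℝ, sparsity w ≤ k ∧ X.mulVec w = c)) := by
  have fwd : ∀ (x : Fin d → ℝ) (w : Fin n → ℝ), A.mulVec x - b = w →
      X.mulVec w = c := by
    intro x w hw
    have hXAx : X.mulVec (A.mulVec x) = 0 := by
      rw [Matrix.mulVec_mulVec, hXA, Matrix.zero_mulVec]
    rw [← hw, Matrix.mulVec_sub, hXAx, hc, zero_sub]
  have conv : ∀ w' : Fin n → ℝ, sparsity w' ≤ k → X.mulVec w' = c →
      ∃ (x' : Fin d → ℝ) (S' : Finset (Fin n)), n - k ≤ S'.card ∧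
        ∀ i ∈ S', (A.mulVec x' - b) i = 0 := by
    intro w' hs hXw
    have h0 : X.mulVec (w' + b) = 0 := by
      rw [Matrix.mulVec_add, hXw, hc]; ring_nf
    obtain ⟨x', hx'⟩ := (hker (w' + b)).mp h0
    refine ⟨x', Finset.univ.filter fun i => w' i = 0, ?_, ?_⟩
    · have := Finset.card_filter_add_card_filter_not
        (s := (Finset.univ : Finset (Fin n))) (p := fun i => w' i = 0)
      simp only [Finset.card_univ, Fintype.card_fin] at this
      have hs' : (Finset.univ.filter fun i => ¬ w' i = 0).card ≤ k := hs
      omega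
    · intro i hi
      simp only [Finset.mem_filter] at hi
      have : A.mulVec x' - b = w' := by rw [hx']; ring_nf
      rw [this]; exact hi.2
  refine ⟨fun x w _ hw => fwd x w hw, conv, ?_⟩
  constructor
  · rintro ⟨x, S, hS, hzero⟩
    refine ⟨A.mulVec x - b, ?_, fwd x _ rfl⟩
    have hsub : (Finset.univ.filter fun i => (A.mulVec x - b) i ≠ 0) ⊆ Sᶜ := by
      intro i hi
      simp only [Finset.mem_filter] at hi
      simp only [Finset.mem_compl]
      exact fun hiS => hi.2 (hzero i hiS)
    calc sparsity (A.mulVec x - b) ≤ Sᶜ.card := Finset.card_le_card hsub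
      _ = n - S.card := by rw [Finset.card_compl, Fintype.card_fin]
      _ ≤ k := by omega
  · rintro ⟨w, hs, hXw⟩
    obtain ⟨x', S', h1, h2⟩ := conv w hs hXw
    exact ⟨x', S', h1, h2⟩
end

section
/- Let S, X be an exact cover instance (S a finite collection of subsets of a finite set X). Construct A ∈ ℝ^{(2|S|+|X|)×|S|} and b as follows: for each i ∈ [|S|], include the two rows encoding constraints y_i = 0 and y_i = 1; then include |X| rows where row for element e ∈ X has a 1 in column i iff e belongs to the i-th set, with target entry 1. Set k = |X| + |S|. Then there exists a subset T of the rows with |T| = k and a vector y with (Ay - b)_T = 0 if and only if there exists a subcollection S' ⊆ S such that every element of X belongs to exactly one member of S'. -/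
open Matrix Classical

/-- Rows of the exact-cover reduction matrix: for each set index `i ∈ Fin s`,
a row forcing `y i = 0` (`.inl (.inl i)`) and a row forcing `y i = 1`
(`.inl (.inr i)`); and for each element `e ∈ Fin m`, a cover row (`.inr e`). -/
noncomputable def exactCoverMatrix (s m : ℕ) (sets : Fin s → Finset (Fin m)) :
    Matrix ((Fin s ⊕ Fin s) ⊕ Fin m) (Fin s) ℝ :=
  fun r j =>
    match r with
    | .inl (.inl i) => if j = i then 1 else 0
    | .inl (.inr i) => if j = i then 1 else 0
    | .inr e => if e ∈ sets j then 1 else 0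

noncomputable def exactCoverTarget (s m : ℕ) : ((Fin s ⊕ Fin s) ⊕ Fin m) → ℝ :=
  fun r =>
    match r with
    | .inl (.inl _) => 0
    | .inl (.inr _) => 1
    | .inr _ => 1

theorem exactCover_iff_robust_zero (s m : ℕ) (sets : Fin s → Finset (Fin m)) :
    (∃ (T : Finset ((Fin s ⊕ Fin s) ⊕ Fin m)) (y : Fin s → ℝ),
        T.card = m + s ∧
        ∀ t ∈ T, ((exactCoverMatrix s m sets).mulVec y - exactCoverTarget s m) t = 0) ↔
      (∃ S' : Finset (Fin s), ∀ e : Fin m, ∃! i, i ∈ S' ∧ e ∈ sets i) := by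
  constructor
  · rintro ⟨T, y, hcard, hT⟩
    -- extract row equations
    have h0 : ∀ i : Fin s, Sum.inl (Sum.inl i) ∈ T → y i = 0 := by
      intro i hi
      have := hT _ hi
      simpa [exactCoverMatrix, exactCoverTarget, mulVec, dotProduct] using this
    have h1 : ∀ i : Fin s, Sum.inl (Sum.inr i) ∈ T → y i = 1 := by
      intro i hi
      have := hT _ hi
      have h := this
      simp [exactCoverMatrix, exactCoverTarget, mulVec, dotProduct, sub_eq_zero] at h
      exact h
    have hcov : ∀ e : Fin m, Sum.inr e ∈ T →
        ∑ j, (if e ∈ sets j then (1:ℝ) else 0) * y j = 1 := by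
      intro e he
      have := hT _ he
      simpa [exactCoverMatrix, exactCoverTarget, mulVec, dotProduct, sub_eq_zero] using this
    have key : ∀ i : Fin s, ¬ (Sum.inl (Sum.inl i) ∈ T ∧ Sum.inl (Sum.inr i) ∈ T) := by
      rintro i ⟨ha, hb⟩
      have := (h0 i ha).symm.trans (h1 i hb)
      norm_num at this
    classical
    set TL := T.filter (fun r => r.isLeft) with hTL
    set TR := T.filter (fun r => ¬ r.isLeft) with hTR
    have hsplit : TL.card + TR.card = T.card := Finset.card_filter_add_card_filter_not _
    -- map left rows to indices
    let g : ((Fin s ⊕ Fin s) ⊕ Fin m) → ℕ := fun r =>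
      match r with
      | .inl (.inl i) => i
      | .inl (.inr i) => i
      | .inr _ => 0
    have hginj : Set.InjOn g TL := by
      rintro a ha b hb hab
      simp only [hTL, Finset.mem_coe, Finset.mem_filter] at ha hb
      rcases a with (i | i) | e
      · rcases b with (i' | i') | e'
        · have : i = i' := Fin.val_injective hab
          rw [this]
        · exfalso
          have : i = i' := Fin.val_injective hab
          subst this
          exact key i ⟨ha.1, hb.1⟩
        · simp at hb
      · rcases b with (i' | i') | e'
        · exfalso
          have : i = i' := Fin.val_injective hab
          subst this
          exact key i ⟨hb.1, ha.1⟩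
        · have : i = i' := Fin.val_injective hab
          rw [this]
        · simp at hb
      · simp at ha
    have hgmem : ∀ a ∈ TL, g a ∈ Finset.range s := by
      intro a ha
      simp only [hTL, Finset.mem_filter] at ha
      rcases a with (i | i) | e
      · simpa [g] using i.isLt
      · simpa [g] using i.isLt
      · simp at ha
    have hTLle : TL.card ≤ s := by
      simpa using Finset.card_le_card_of_injOn g hgmem hginj
    let h : ((Fin s ⊕ Fin s) ⊕ Fin m) → ℕ := fun r =>
      match r with
      | .inr e => e
      | _ => 0
    have hhinj : Set.InjOn h TR := by
      rintro a ha b hb hab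
      simp only [hTR, Finset.mem_coe, Finset.mem_filter] at ha hb
      rcases a with (i | i) | e
      · simp at ha
      · simp at ha
      · rcases b with (i' | i') | e'
        · simp at hb
        · simp at hb
        · have : e = e' := Fin.val_injective hab
          rw [this]
    have hhmem : ∀ a ∈ TR, h a ∈ Finset.range m := by
      intro a ha
      simp only [hTR, Finset.mem_filter] at ha
      rcases a with (i | i) | e
      · simp at ha
      · simp at ha
      · simpa [h] using e.isLt
    have hTRle : TR.card ≤ m := by
      simpa using Finset.card_le_card_of_injOn h hhmem hhinj
    have hTLcard : TL.card = s := by omega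
    have hTRcard : TR.card = m := by omega
    -- all cover rows are in T
    have hinrT : ∀ e : Fin m, Sum.inr e ∈ T := by
      have hsub : TR ⊆ Finset.univ.image (Sum.inr : Fin m → (Fin s ⊕ Fin s) ⊕ Fin m) := by
        intro r hr
        simp only [hTR, Finset.mem_filter] at hr
        rcases r with (i | i) | e
        · simp at hr
        · simp at hr
        · simp
      have himc : (Finset.univ.image (Sum.inr : Fin m → (Fin s ⊕ Fin s) ⊕ Fin m)).card = m := by
        rw [Finset.card_image_of_injective _ Sum.inr_injective]
        simp
      have heq : TR = Finset.univ.image (Sum.inr : Fin m → (Fin s ⊕ Fin s) ⊕ Fin m) :=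
        Finset.eq_of_subset_of_card_le hsub (by omega)
      intro e
      have : Sum.inr e ∈ TR := by rw [heq]; simp
      exact (Finset.mem_filter.mp this).1
    -- each y i is 0 or 1
    have hy01 : ∀ i : Fin s, y i = 0 ∨ y i = 1 := by
      intro i
      have himg : Finset.image g TL = Finset.range s := by
        apply Finset.eq_of_subset_of_card_le
        · intro x hx
          obtain ⟨a, ha, rfl⟩ := Finset.mem_image.mp hx
          exact hgmem a ha
        · rw [Finset.card_image_of_injOn hginj, hTLcard]
          simp
      have : (i : ℕ) ∈ Finset.image g TL := by rw [himg]; simpa using i.isLt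
      obtain ⟨a, ha, hga⟩ := Finset.mem_image.mp this
      have haT : a ∈ T := (Finset.mem_filter.mp ha).1
      rcases a with (i' | i') | e
      · have : i' = i := Fin.val_injective hga
        subst this
        exact Or.inl (h0 _ haT)
      · have : i' = i := Fin.val_injective hga
        subst this
        exact Or.inr (h1 _ haT)
      · simp only [hTL, Finset.mem_filter] at ha; simp at ha
    -- build S'
    refine ⟨Finset.univ.filter (fun i => y i = 1), ?_⟩
    intro e
    have hsum := hcov e (hinrT e)
    have hre : ∀ j : Fin s, (if e ∈ sets j then (1:ℝ) else 0) * y j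
        = if j ∈ Finset.univ.filter (fun i => y i = 1) ∧ e ∈ sets j then 1 else 0 := by
      intro j
      rcases hy01 j with hj | hj <;> by_cases hm : e ∈ sets j <;> simp [hj, hm]
    rw [Finset.sum_congr rfl (fun j _ => hre j), Finset.sum_boole] at hsum
    have hcard1 : (Finset.univ.filter
        (fun j => j ∈ Finset.univ.filter (fun i => y i = 1) ∧ e ∈ sets j)).card = 1 := by
      exact_mod_cast hsum
    obtain ⟨a, hae⟩ := Finset.card_eq_one.mp hcard1
    refine ⟨a, ?_, ?_⟩
    · have : a ∈ Finset.univ.filter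
        (fun j => j ∈ Finset.univ.filter (fun i => y i = 1) ∧ e ∈ sets j) := by
        rw [hae]; simp
      simpa using (Finset.mem_filter.mp this).2
    · intro b hb
      have : b ∈ Finset.univ.filter
        (fun j => j ∈ Finset.univ.filter (fun i => y i = 1) ∧ e ∈ sets j) := by
        simp only [Finset.mem_filter, Finset.mem_univ, true_and] at hb ⊢
        exact hb
      rw [hae] at this
      simpa using this
  · rintro ⟨S', hS'⟩
    classical
    refine ⟨(Finset.univ.image (Sum.inr : Fin m → (Fin s ⊕ Fin s) ⊕ Fin m)) ∪
      (Finset.univ.image (fun i : Fin s =>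
        if i ∈ S' then (Sum.inl (Sum.inr i) : (Fin s ⊕ Fin s) ⊕ Fin m)
        else Sum.inl (Sum.inl i))),
      (fun i => if i ∈ S' then 1 else 0), ?_, ?_⟩
    · rw [Finset.card_union_of_disjoint]
      · rw [Finset.card_image_of_injective _ Sum.inr_injective,
          Finset.card_image_of_injOn]
        · simp
        · intro a _ b _ hab
          by_cases ha : a ∈ S' <;> by_cases hb : b ∈ S' <;>
            simp [ha, hb] at hab <;> exact hab
      · rw [Finset.disjoint_left]
        intro r hr hr'
        obtain ⟨e, _, rfl⟩ := Finset.mem_image.mp hr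
        obtain ⟨i, _, hi⟩ := Finset.mem_image.mp hr'
        by_cases h : i ∈ S' <;> simp [h] at hi
    · intro t ht
      rcases Finset.mem_union.mp ht with hl | hl
      · obtain ⟨e, _, rfl⟩ := Finset.mem_image.mp hl
        obtain ⟨i₀, hi₀, huniq⟩ := hS' e
        have hfe : Finset.univ.filter (fun j => e ∈ sets j ∧ j ∈ S') = {i₀} := by
          ext b
          simp only [Finset.mem_filter, Finset.mem_univ, true_and, Finset.mem_singleton]
          constructor
          · rintro ⟨hb1, hb2⟩; exact huniq b ⟨hb2, hb1⟩
          · rintro rfl; exact ⟨hi₀.2, hi₀.1⟩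
        simp only [Pi.sub_apply, exactCoverMatrix, exactCoverTarget, mulVec, dotProduct,
          sub_eq_zero]
        have : ∀ j : Fin s, (if e ∈ sets j then (1:ℝ) else 0) * (if j ∈ S' then 1 else 0)
            = if e ∈ sets j ∧ j ∈ S' then 1 else 0 := by
          intro j
          by_cases h1 : e ∈ sets j <;> by_cases h2 : j ∈ S' <;> simp [h1, h2]
        rw [Finset.sum_congr rfl (fun j _ => this j), Finset.sum_boole, hfe]
        simp
      · obtain ⟨i, _, hi⟩ := Finset.mem_image.mp hl
        by_cases h : i ∈ S'
        · simp only [h, if_true] at hi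
          subst hi
          simp [exactCoverMatrix, exactCoverTarget, mulVec, dotProduct, h]
        · simp only [h, if_false] at hi
          subst hi
          simp [exactCoverMatrix, exactCoverTarget, mulVec, dotProduct, h]
end

section
/- In the exact-cover reduction matrix above, if a subset T of rows of size k = |X| + |S| and a vector y satisfy (Ay - b)_T = 0, then for every i exactly one of the two rows {y_i = 0, y_i = 1} lies in T, all |X| cover rows lie in T, and consequently y ∈ {0,1}^{|S|}. -/
open Matrix Classical

theorem exactCover_structure (s m : ℕ) (sets : Fin s → Finset (Fin m))
    (T : Finset ((Fin s ⊕ Fin s) ⊕ Fin m)) (y : Fin s → ℝ)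
    (hT : T.card = m + s)
    (hzero : ∀ t ∈ T,
      ((exactCoverMatrix s m sets).mulVec y - exactCoverTarget s m) t = 0) :
    (∀ i : Fin s,
      (Sum.inl (Sum.inl i) ∈ T ∧ Sum.inl (Sum.inr i) ∉ T) ∨
      (Sum.inl (Sum.inl i) ∉ T ∧ Sum.inl (Sum.inr i) ∈ T)) ∧
    (∀ e : Fin m, Sum.inr e ∈ T) ∧
    (∀ i : Fin s, y i = 0 ∨ y i = 1) := by
  -- constraint consequences
  have h0 : ∀ i : Fin s, Sum.inl (Sum.inl i) ∈ T → y i = 0 := by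
    intro i hi
    have := hzero _ hi
    simpa [exactCoverMatrix, exactCoverTarget, mulVec, dotProduct, Pi.sub_apply,
      sub_eq_zero] using this
  have h1 : ∀ i : Fin s, Sum.inl (Sum.inr i) ∈ T → y i = 1 := by
    intro i hi
    have := hzero _ hi
    simpa [exactCoverMatrix, exactCoverTarget, mulVec, dotProduct, Pi.sub_apply,
      sub_eq_zero] using this
  -- at most one of each pair in T
  have hpair : ∀ i : Fin s, ¬(Sum.inl (Sum.inl i) ∈ T ∧ Sum.inl (Sum.inr i) ∈ T) := by
    rintro i ⟨ha, hb⟩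
    have := (h0 i ha).symm.trans (h1 i hb)
    norm_num at this
  -- the collapsing map
  set φ : ((Fin s ⊕ Fin s) ⊕ Fin m) → (Fin s ⊕ Fin m) :=
    Sum.map (Sum.elim id id) id with hφ
  have hinj : Set.InjOn φ T := by
    rintro ((a | a) | a) ha ((b | b) | b) hb hab <;>
      simp [hφ, Sum.map] at hab <;> subst hab <;>
      first
        | rfl
        | exact absurd ⟨ha, hb⟩ (hpair _)
        | exact absurd ⟨hb, ha⟩ (hpair _)
  have hcard : (T.image φ).card = T.card := Finset.card_image_of_injOn hinj
  have hcard2 : (T.image φ).card = Fintype.card (Fin s ⊕ Fin m) := by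
    simp [hcard, hT, Fintype.card_sum, Nat.add_comm]
  have himg : T.image φ = Finset.univ :=
    Finset.eq_univ_of_card _ hcard2
  -- surjectivity consequences
  have hsur : ∀ z : Fin s ⊕ Fin m, ∃ t ∈ T, φ t = z := by
    intro z
    have : z ∈ T.image φ := himg ▸ Finset.mem_univ z
    simpa [Finset.mem_image] using this
  have hE : ∀ e : Fin m, Sum.inr e ∈ T := by
    intro e
    obtain ⟨t, ht, hte⟩ := hsur (Sum.inr e)
    rcases t with (t | t) | t <;> simp [hφ, Sum.map] at hte
    cases hte; exact ht
  have hI : ∀ i : Fin s,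
      (Sum.inl (Sum.inl i) ∈ T ∧ Sum.inl (Sum.inr i) ∉ T) ∨
      (Sum.inl (Sum.inl i) ∉ T ∧ Sum.inl (Sum.inr i) ∈ T) := by
    intro i
    obtain ⟨t, ht, hte⟩ := hsur (Sum.inl i)
    rcases t with (t | t) | t <;> simp [hφ, Sum.map] at hte
    · cases hte
      exact Or.inl ⟨ht, fun hb => hpair _ ⟨ht, hb⟩⟩
    · cases hte
      exact Or.inr ⟨fun ha => hpair _ ⟨ha, ht⟩, ht⟩
  refine ⟨hI, hE, fun i => ?_⟩
  rcases hI i with ⟨ha, _⟩ | ⟨_, hb⟩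
  · exact Or.inl (h0 i ha)
  · exact Or.inr (h1 i hb)
end

section
/- Consider the four data points (0,10), (1,0), (2,0), (3,0) in ℝ². The least-squares line fit through all four points is y = 7 - 3x, and among the four residuals of this fit, the residual at (1,0) has the largest absolute value (namely 4, versus 3 at (0,10)). Hence the greedy algorithm that removes the point of largest residual removes (1,0), and the resulting optimal least-squares error on the remaining three points {(0,10),(2,0),(3,0)} is strictly positive, whereas removing (0,10) instead achieves zero error via the line y = 0. -/
theorem greedy_counterexample :
    -- the least-squares fit through (0,10),(1,0),(2,0),(3,0) is y = 7 - 3x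
    (∀ a b : ℝ,
      ((-3) * 0 + 7 - 10) ^ 2 + ((-3) * 1 + 7 - 0) ^ 2 +
          ((-3) * 2 + 7 - 0) ^ 2 + ((-3) * 3 + 7 - 0) ^ 2 ≤
        (a * 0 + b - 10) ^ 2 + (a * 1 + b - 0) ^ 2 +
          (a * 2 + b - 0) ^ 2 + (a * 3 + b - 0) ^ 2) ∧
    -- the residual at (1,0) is 4 in absolute value, versus 3 at (0,10)
    (|(-3 : ℝ) * 1 + 7 - 0| = 4 ∧ |(-3 : ℝ) * 0 + 7 - 10| = 3) ∧
    -- the residual at (1,0) has strictly largest absolute value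
    (|(-3 : ℝ) * 0 + 7 - 10| < |(-3 : ℝ) * 1 + 7 - 0| ∧
     |(-3 : ℝ) * 2 + 7 - 0| < |(-3 : ℝ) * 1 + 7 - 0| ∧
     |(-3 : ℝ) * 3 + 7 - 0| < |(-3 : ℝ) * 1 + 7 - 0|) ∧
    -- after greedily removing (1,0), every line has strictly positive error
    (∀ a b : ℝ,
      0 < (a * 0 + b - 10) ^ 2 + (a * 2 + b - 0) ^ 2 + (a * 3 + b - 0) ^ 2) ∧
    -- whereas removing (0,10) achieves zero error via the line y = 0
    (∃ a b : ℝ,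
      (a * 1 + b - 0) ^ 2 + (a * 2 + b - 0) ^ 2 + (a * 3 + b - 0) ^ 2 = 0) := by
  refine ⟨fun a b => by nlinarith [sq_nonneg (a + 3), sq_nonneg (b - 7), sq_nonneg (a + b - 4), sq_nonneg (3*a + 2*b - 1)], by norm_num, by norm_num, fun a b => by nlinarith [sq_nonneg (b - 10), sq_nonneg (2*a + b), sq_nonneg (3*a + b), sq_nonneg a, sq_nonneg (a + 10)], ⟨0, 0, by norm_num⟩⟩
end

section
/- For the data points (0,10), (1,0), (2,0), (3,0), the best least-squares line on the three points {(0,10),(2,0),(3,0)} (obtained by removing (1,0)) is y = 9.2857... - 3.5714...x (i.e., y = (65 - 25x)/7), and under this line the point (1,0) has the largest absolute residual among all four points. Hence alternating minimization initialized by removing (1,0) removes (1,0) again and never achieves the optimal zero-loss solution. -/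
theorem alternating_minimization_counterexample :
    -- the best least-squares line on {(0,10),(2,0),(3,0)} is y = (65 - 25x)/7
    (∀ a b : ℝ,
      ((-25 / 7) * 0 + 65 / 7 - 10) ^ 2 + ((-25 / 7) * 2 + 65 / 7 - 0) ^ 2 +
          ((-25 / 7) * 3 + 65 / 7 - 0) ^ 2 ≤
        (a * 0 + b - 10) ^ 2 + (a * 2 + b - 0) ^ 2 + (a * 3 + b - 0) ^ 2) ∧
    -- under this line, (1,0) has the strictly largest absolute residual
    (|(-25 / 7 : ℝ) * 0 + 65 / 7 - 10| < |(-25 / 7 : ℝ) * 1 + 65 / 7 - 0| ∧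
     |(-25 / 7 : ℝ) * 2 + 65 / 7 - 0| < |(-25 / 7 : ℝ) * 1 + 65 / 7 - 0| ∧
     |(-25 / 7 : ℝ) * 3 + 65 / 7 - 0| < |(-25 / 7 : ℝ) * 1 + 65 / 7 - 0|) ∧
    -- so removing (1,0) again never achieves zero loss
    (∀ a b : ℝ,
      0 < (a * 0 + b - 10) ^ 2 + (a * 2 + b - 0) ^ 2 + (a * 3 + b - 0) ^ 2) ∧
    -- whereas the optimal solution removes (0,10) and achieves zero loss
    (∃ a b : ℝ,
      (a * 1 + b - 0) ^ 2 + (a * 2 + b - 0) ^ 2 + (a * 3 + b - 0) ^ 2 = 0) := by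
  refine ⟨fun a b => by nlinarith [sq_nonneg (a + 25/7), sq_nonneg (b - 65/7), sq_nonneg (5*a + 3*b - 10), sq_nonneg (a*2 + b), sq_nonneg (a*3+b)], ?_, fun a b => by nlinarith [sq_nonneg (b - 10), sq_nonneg (2*a+b), sq_nonneg (3*a+b), sq_nonneg a, sq_nonneg (a - 5)], ⟨0, 0, by ring⟩⟩
  refine ⟨?_, ?_, ?_⟩ <;> rw [show ((-25/7:ℝ)*1 + 65/7 - 0) = 40/7 by norm_num, abs_of_nonneg (by norm_num : (0:ℝ) ≤ 40/7)] <;> rw [abs_lt] <;> norm_num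
end
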